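/- Let M ∈ ℝ^{n×n} be skew-symmetric with spectral norm ‖M‖₂ ≤ η. Then I + M is nonsingular and for every nonzero y ∈ ℝⁿ one has yᵀ(I + M)⁻¹y ≥ (yᵀy)/(1 + η)². -/

import Mathlib

open Matrix

/-- The `H`-norm of a vector: `‖u‖_H = (uᵀ H u)^{1/2}`. -/
noncomputable def vnorm {α : Type*} [Fintype α] (H : Matrix α α ℝ) (u : α → ℝ) : ℝ :=
  Real.sqrt (u ⬝ᵥ (H *ᵥ u))

/-- The weighted operator norm `‖M‖_{H1,H2} = sup_{v ≠ 0} ‖M v‖_{H2} / ‖v‖_{H1}`.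
For a square matrix, `‖M‖_H = wnorm H H M`; the spectral norm is `wnorm 1 1 M`. -/
noncomputable def wnorm {α β : Type*} [Fintype α] [Fintype β]
    (H1 : Matrix α α ℝ) (H2 : Matrix β β ℝ) (M : Matrix β α ℝ) : ℝ :=
  sSup {r : ℝ | ∃ v : α → ℝ, v ≠ 0 ∧ r = vnorm H2 (M *ᵥ v) / vnorm H1 v}

/-! The skew part of `I + M` contributes nothing to the quadratic form, so
`xᵀ(I + M)x = xᵀx`: this makes `I + M` injective, and for `y = (I + M)x` it gives
`yᵀ(I + M)⁻¹y = xᵀx`, while `‖y‖ ≤ (1 + η)‖x‖` by the triangle inequality. -/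

section Skew

variable {ι R : Type*} [Fintype ι] [CommRing R] [IsAddTorsionFree R] {M : Matrix ι ι R}

theorem dotProduct_mulVec_self_eq_zero_of_transpose_eq_neg (hM : Mᵀ = -M) (x : ι → R) :
    x ⬝ᵥ (M *ᵥ x) = 0 := by
  have h : x ⬝ᵥ (M *ᵥ x) = -(x ⬝ᵥ (M *ᵥ x)) := by
    calc x ⬝ᵥ (M *ᵥ x) = (Mᵀ *ᵥ x) ⬝ᵥ x := by
          rw [dotProduct_mulVec, ← vecMul_transpose, transpose_transpose]
      _ = -(x ⬝ᵥ (M *ᵥ x)) := by rw [hM, neg_mulVec, neg_dotProduct, dotProduct_comm]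
  exact self_eq_neg.mp h

theorem dotProduct_one_add_mulVec_self_of_transpose_eq_neg [DecidableEq ι]
    (hM : Mᵀ = -M) (x : ι → R) : x ⬝ᵥ ((1 + M) *ᵥ x) = x ⬝ᵥ x := by
  rw [add_mulVec, one_mulVec, dotProduct_add,
    dotProduct_mulVec_self_eq_zero_of_transpose_eq_neg hM, add_zero]

end Skew

theorem isUnit_det_one_add_of_transpose_eq_neg {ι K : Type*} [Fintype ι] [DecidableEq ι]
    [Field K] [LinearOrder K] [IsStrictOrderedRing K] {M : Matrix ι ι K} (hM : Mᵀ = -M) :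
    IsUnit (1 + M).det := by
  rw [isUnit_iff_ne_zero, Ne, ← exists_mulVec_eq_zero_iff]
  rintro ⟨x, hx, hx0⟩
  have : x ⬝ᵥ x = 0 := by
    rw [← dotProduct_one_add_mulVec_self_of_transpose_eq_neg hM, hx0, dotProduct_zero]
  exact hx (dotProduct_self_eq_zero.mp this)

section EuclideanNorm

open scoped Matrix.Norms.L2Operator

variable {α β : Type*} [Fintype α] [Fintype β]

theorem vnorm_one [DecidableEq α] (u : α → ℝ) : vnorm 1 u = ‖WithLp.toLp 2 u‖ := by
  rw [vnorm, one_mulVec, norm_eq_sqrt_real_inner, EuclideanSpace.inner_toLp_toLp,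
    star_trivial]

theorem dotProduct_self_eq_norm_toLp_sq (u : α → ℝ) :
    u ⬝ᵥ u = ‖WithLp.toLp 2 u‖ ^ 2 := by
  rw [← real_inner_self_eq_norm_sq, EuclideanSpace.inner_toLp_toLp, star_trivial]

theorem norm_toLp_mulVec_le_of_wnorm_one_le [DecidableEq α] [DecidableEq β] {M : Matrix β α ℝ}
    {η : ℝ} (h : wnorm 1 1 M ≤ η) (v : α → ℝ) :
    ‖WithLp.toLp 2 (M *ᵥ v)‖ ≤ η * ‖WithLp.toLp 2 v‖ := by
  rcases eq_or_ne v 0 with rfl | hv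
  · simp
  have hbdd :
      BddAbove {r : ℝ | ∃ w : α → ℝ, w ≠ 0 ∧ r = vnorm 1 (M *ᵥ w) / vnorm 1 w} := by
    refine ⟨‖M‖, ?_⟩
    rintro _ ⟨w, -, rfl⟩
    rw [vnorm_one, vnorm_one]
    exact div_le_of_le_mul₀ (norm_nonneg _) (norm_nonneg _)
      (l2_opNorm_mulVec M (WithLp.toLp 2 w))
  have hratio : vnorm 1 (M *ᵥ v) / vnorm 1 v ≤ η := (le_csSup hbdd ⟨v, hv, rfl⟩).trans h
  rwa [vnorm_one, vnorm_one, div_le_iff₀ (by simpa using hv)] at hratio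

end EuclideanNorm

theorem stmt_3 {n : ℕ} (M : Matrix (Fin n) (Fin n) ℝ) (η : ℝ)
    (hM : Mᵀ = -M) (hMnorm : wnorm 1 1 M ≤ η) :
    IsUnit (1 + M).det ∧
    ∀ y : Fin n → ℝ, y ≠ 0 → (y ⬝ᵥ y) / (1 + η) ^ 2 ≤ y ⬝ᵥ ((1 + M)⁻¹ *ᵥ y) := by
  have hdet := isUnit_det_one_add_of_transpose_eq_neg hM
  refine ⟨hdet, fun y _ => ?_⟩
  set x := (1 + M)⁻¹ *ᵥ y
  have hyx : (1 + M) *ᵥ x = y := by rw [mulVec_mulVec, mul_nonsing_inv _ hdet, one_mulVec]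
  have hdot : y ⬝ᵥ x = x ⬝ᵥ x := by
    rw [dotProduct_comm, ← hyx, dotProduct_one_add_mulVec_self_of_transpose_eq_neg hM]
  have hnorm : ‖WithLp.toLp 2 y‖ ≤ (1 + η) * ‖WithLp.toLp 2 x‖ := by
    calc ‖WithLp.toLp 2 y‖ = ‖WithLp.toLp 2 x + WithLp.toLp 2 (M *ᵥ x)‖ := by
          rw [← hyx, add_mulVec, one_mulVec, WithLp.toLp_add]
      _ ≤ ‖WithLp.toLp 2 x‖ + η * ‖WithLp.toLp 2 x‖ :=
          (norm_add_le _ _).trans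
            (add_le_add le_rfl (norm_toLp_mulVec_le_of_wnorm_one_le hMnorm x))
      _ = (1 + η) * ‖WithLp.toLp 2 x‖ := by ring
  rw [hdot]
  refine div_le_of_le_mul₀ (sq_nonneg _) (dotProduct_self_star_nonneg x) ?_
  rw [dotProduct_self_eq_norm_toLp_sq, dotProduct_self_eq_norm_toLp_sq, ← mul_pow, mul_comm]
  exact pow_le_pow_left₀ (norm_nonneg _) hnorm 2
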